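/- arXiv:2408.02172 — 2 statements merged into one kernel-verified Lean document; each statement's English description precedes it below -/
import Mathlib

section
/- Let K ≥ 1 and let b_1, ..., b_{K+1} be nonzero vectors in ℝ^m. Define q_j = b_j / (b_jᵀ b_j). Let D be the K × mK block tridiagonal matrix whose (j, i) block (of size 1 × m) equals (b_j + b_{j+1})ᵀ if i = j, −b_jᵀ if i = j−1, −b_{j+1}ᵀ if i = j+1, and 0 otherwise. If ∑_{j=1}^{K+1} q_j ≠ 0, then D has full row rank K. -/
open Matrix

lemma block_sum (K m : ℕ) (b : Fin (K + 1) → Fin m → ℝ)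
    (c : Fin K → ℝ) (C : ℕ → ℝ) (hCdef : ∀ n, C n = if h : n < K then c ⟨n, h⟩ else 0)
    (i : Fin K) (r : Fin m) :
    ∑ j : Fin K, c j * (if i = j then b j.castSucc r + b j.succ r
        else if (i : ℕ) + 1 = (j : ℕ) then -(b j.castSucc r)
        else if (i : ℕ) = (j : ℕ) + 1 then -(b j.succ r) else 0)
      = (C i - (if (i : ℕ) = 0 then 0 else C ((i : ℕ) - 1))) * b i.castSucc r
        - (C ((i : ℕ) + 1) - C (i : ℕ)) * b i.succ r := by
  classical
  have hsplit : ∀ j : Fin K, c j * (if i = j then b j.castSucc r + b j.succ r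
        else if (i : ℕ) + 1 = (j : ℕ) then -(b j.castSucc r)
        else if (i : ℕ) = (j : ℕ) + 1 then -(b j.succ r) else 0)
      = (if j = i then c j * (b i.castSucc r + b i.succ r) else 0)
        + (if (j : ℕ) = (i : ℕ) + 1 then -(c j * b i.succ r) else 0)
        + (if (j : ℕ) + 1 = (i : ℕ) then -(c j * b i.castSucc r) else 0) := by
    intro j
    by_cases h1 : i = j
    · subst h1
      rw [if_pos rfl, if_pos rfl, if_neg (by omega), if_neg (by omega)]
      ring
    · have h1' : ¬ j = i := fun h => h1 h.symm
      rw [if_neg h1, if_neg h1']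
      by_cases h2 : (i : ℕ) + 1 = (j : ℕ)
      · have hb1 : b j.castSucc = b i.succ := congrArg b (Fin.ext h2.symm)
        rw [if_pos h2, if_pos (by omega : (j : ℕ) = (i : ℕ) + 1),
          if_neg (by omega : ¬ (j : ℕ) + 1 = (i : ℕ)), hb1]
        ring
      · rw [if_neg h2]
        by_cases h3 : (i : ℕ) = (j : ℕ) + 1
        · have hb2 : b j.succ = b i.castSucc := congrArg b (Fin.ext h3.symm)
          rw [if_pos h3, if_neg (by omega : ¬ (j : ℕ) = (i : ℕ) + 1),
            if_pos (by omega : (j : ℕ) + 1 = (i : ℕ)), hb2]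
          ring
        · rw [if_neg h3, if_neg (by omega : ¬ (j : ℕ) = (i : ℕ) + 1),
            if_neg (by omega : ¬ (j : ℕ) + 1 = (i : ℕ))]
          ring
  rw [Finset.sum_congr rfl (fun j _ => hsplit j), Finset.sum_add_distrib,
    Finset.sum_add_distrib]
  have hS1 : ∑ j : Fin K, (if j = i then c j * (b i.castSucc r + b i.succ r) else 0)
      = c i * (b i.castSucc r + b i.succ r) := by
    rw [Finset.sum_ite_eq' Finset.univ i]
    simp
  have hS2 : ∑ j : Fin K, (if (j : ℕ) = (i : ℕ) + 1 then -(c j * b i.succ r) else 0)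
      = -(C ((i : ℕ) + 1) * b i.succ r) := by
    by_cases h : (i : ℕ) + 1 < K
    · have : ∀ j : Fin K, ((j : ℕ) = (i : ℕ) + 1) = (j = ⟨(i : ℕ) + 1, h⟩) := by
        intro j; rw [Fin.ext_iff]
      simp_rw [this]
      rw [Finset.sum_ite_eq' Finset.univ]
      simp [hCdef, h]
    · rw [Finset.sum_eq_zero (fun j _ => if_neg (by omega))]
      rw [hCdef, dif_neg h]
      ring
  have hS3 : ∑ j : Fin K, (if (j : ℕ) + 1 = (i : ℕ) then -(c j * b i.castSucc r) else 0)
      = -((if (i : ℕ) = 0 then 0 else C ((i : ℕ) - 1)) * b i.castSucc r) := by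
    by_cases h : (i : ℕ) = 0
    · rw [Finset.sum_eq_zero (fun j _ => if_neg (by omega)), if_pos h]
      ring
    · have hlt : (i : ℕ) - 1 < K := by omega
      have : ∀ j : Fin K, ((j : ℕ) + 1 = (i : ℕ)) = (j = ⟨(i : ℕ) - 1, hlt⟩) := by
        intro j; rw [Fin.ext_iff]; simp; omega
      simp_rw [this]
      rw [Finset.sum_ite_eq' Finset.univ]
      simp [hCdef, hlt, if_neg h]
  rw [hS1, hS2, hS3, hCdef (i : ℕ), dif_pos i.isLt]
  simp only [Fin.eta]
  ring

theorem stmt0 (K m : ℕ) (hK : 1 ≤ K) (hm : 1 ≤ m)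
    (b : Fin (K + 1) → Fin m → ℝ) (hb : ∀ j, b j ≠ 0)
    (q : Fin (K + 1) → Fin m → ℝ)
    (hq : ∀ j, q j = (∑ r, b j r * b j r)⁻¹ • b j)
    (hsum : ∑ j, q j ≠ 0)
    (D : Matrix (Fin K) (Fin K × Fin m) ℝ)
    (hD : ∀ (j : Fin K) (i : Fin K) (r : Fin m),
      D j (i, r) =
        if i = j then b j.castSucc r + b j.succ r
        else if (i : ℕ) + 1 = (j : ℕ) then -(b j.castSucc r)
        else if (i : ℕ) = (j : ℕ) + 1 then -(b j.succ r)
        else 0) :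
    D.rank = K := by
  classical
  have hli : LinearIndependent ℝ D.row := by
    rw [Fintype.linearIndependent_iff]
    intro c hc
    set C : ℕ → ℝ := fun n => if h : n < K then c ⟨n, h⟩ else 0 with hCdef
    set d : ℕ → ℝ := fun n => C n - (if n = 0 then 0 else C (n - 1)) with hddef
    have hCn : ∀ n, C n = if h : n < K then c ⟨n, h⟩ else 0 := fun n => rfl
    -- the block equations
    have hblock : ∀ (i : Fin K) (r : Fin m),
        d (i : ℕ) * b i.castSucc r - d ((i : ℕ) + 1) * b i.succ r = 0 := by
      intro i r
      have h1 : ∑ j : Fin K, c j * D j (i, r) = 0 := by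
        have h0 := congrFun hc (i, r)
        simpa [Finset.sum_apply, Matrix.row_apply] using h0
      have h2 := block_sum K m b c C hCn i r
      simp_rw [← hD] at h2
      rw [h1] at h2
      have hd1 : d (i : ℕ) = C (i : ℕ) - (if (i : ℕ) = 0 then 0 else C ((i : ℕ) - 1)) := rfl
      have hd2 : d ((i : ℕ) + 1) = C ((i : ℕ) + 1) - C (i : ℕ) := by
        simp [hddef]
      rw [hd1, hd2, ← h2]
    -- the chain of equalities
    have hchain : ∀ n (hn : n < K) (r : Fin m),
        d n * b ⟨n, by omega⟩ r = d (n + 1) * b ⟨n + 1, by omega⟩ r := by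
      intro n hn r
      have := hblock ⟨n, hn⟩ r
      have e1 : (⟨n, hn⟩ : Fin K).castSucc = (⟨n, by omega⟩ : Fin (K + 1)) := rfl
      have e2 : (⟨n, hn⟩ : Fin K).succ = (⟨n + 1, by omega⟩ : Fin (K + 1)) := rfl
      rw [e1, e2] at this
      linarith
    have hconst : ∀ n (hn : n < K + 1) (r : Fin m),
        d n * b ⟨n, hn⟩ r = d 0 * b 0 r := by
      intro n
      induction n with
      | zero => intro hn r; rfl
      | succ n ih =>
        intro hn r
        rw [← hchain n (by omega) r]
        exact ih (by omega) r
    -- telescoping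
    have htel : ∀ N : ℕ, ∑ n ∈ Finset.range (N + 1), d n = C N := by
      intro N
      induction N with
      | zero => simp [hddef]
      | succ N ih =>
        rw [Finset.sum_range_succ, ih]
        simp [hddef]
    have hCK : C K = 0 := by simp [hCn]
    by_cases hv : ∀ r, d 0 * b 0 r = 0
    · -- common vector is zero
      have hd0 : ∀ n, n < K + 1 → d n = 0 := by
        intro n hn
        obtain ⟨r, hr⟩ : ∃ r, b (⟨n, hn⟩ : Fin (K + 1)) r ≠ 0 := by
          by_contra h
          push_neg at h
          exact hb ⟨n, hn⟩ (funext fun r => h r)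
        have := hconst n hn r
        rw [hv r] at this
        exact (mul_eq_zero.mp this).resolve_right hr
      have hCzero : ∀ n, C n = 0 := by
        intro n
        induction n with
        | zero =>
          have := hd0 0 (by omega)
          simpa [hddef] using this
        | succ n ih =>
          by_cases hn : n + 1 < K + 1
          · have h := hd0 (n + 1) hn
            have : C (n + 1) - C n = 0 := by simpa [hddef] using h
            linarith [ih]
          · rw [hCn, dif_neg (by omega)]
      intro i
      have := hCzero (i : ℕ)
      rw [hCn] at this
      rw [dif_pos i.isLt] at this
      simpa using this
    · -- common vector nonzero: contradiction with hsum
      push_neg at hv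
      obtain ⟨r0, hr0⟩ := hv
      exfalso
      apply hsum
      have hdn : ∀ n, n < K + 1 → d n ≠ 0 := by
        intro n hn h0
        apply hr0
        rw [← hconst n hn r0, h0, zero_mul]
      set S : ℝ := ∑ r, (d 0 * b 0 r) * (d 0 * b 0 r) with hSdef
      have hS : 0 < S := by
        apply Finset.sum_pos' (fun r _ => mul_self_nonneg _)
        exact ⟨r0, Finset.mem_univ r0, mul_self_pos.mpr hr0⟩
      have hqj : ∀ (j : Fin (K + 1)) (r : Fin m),
          q j r = d (j : ℕ) * S⁻¹ * (d 0 * b 0 r) := by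
        intro j r
        have hdj := hdn (j : ℕ) j.isLt
        have hbj : ∀ r, b j r = (d (j : ℕ))⁻¹ * (d 0 * b 0 r) := by
          intro r
          have h := hconst (j : ℕ) j.isLt r
          rw [Fin.eta] at h
          field_simp
          linarith [h]
        have hnorm : ∑ r, b j r * b j r = (d (j : ℕ))⁻¹ * (d (j : ℕ))⁻¹ * S := by
          simp_rw [hbj]
          rw [hSdef, Finset.mul_sum]
          congr 1
          ext r
          ring
        rw [hq j]
        simp only [Pi.smul_apply, smul_eq_mul]
        rw [hnorm, hbj r]
        field_simp
      funext r
      rw [Finset.sum_apply]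
      simp_rw [hqj]
      rw [← Finset.sum_mul, ← Finset.sum_mul]
      have : ∑ j : Fin (K + 1), d (j : ℕ) = 0 := by
        rw [Fin.sum_univ_eq_sum_range fun n => d n, htel K, hCK]
      rw [this, zero_mul, zero_mul]
      rfl
  rw [hli.rank_matrix]
  simp
end

section
/- Let K ≥ 1 and let a_1, ..., a_{K+1} be real numbers with a_0 := 0 understood. Let H ∈ ℝ^{mK × mK} be the block tridiagonal matrix with diagonal blocks (a_j + a_{j+1}) I_m for j = 1, ..., K (where a_{K+1} is the last entry) and off-diagonal blocks −a_{j+1} I_m between block rows j and j+1. Then the smallest eigenvalue of H satisfies λ_min(H) ≥ 2 (1 + cos(π/(K+1))) · min{0, min_j a_j}. -/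
open Matrix Finset

lemma amgm (p q x y : ℝ) (hp : 0 < p) (hq : 0 < q) :
    (x - y)^2 ≤ (1 + q/p)*x^2 + (1 + p/q)*y^2 := by
  have h1 : (1 + q/p)*x^2 + (1 + p/q)*y^2 - (x-y)^2 = (q*x + p*y)^2/(p*q) := by
    field_simp; ring
  nlinarith [div_nonneg (sq_nonneg (q*x + p*y)) (mul_pos hp hq).le]


lemma keybound (K : ℕ) (Y : ℕ → ℝ) (h0 : Y 0 = 0) (hK1 : Y (K+1) = 0) :
    ∑ j ∈ range (K+1), (Y (j+1) - Y j)^2 ≤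
      2*(1 + Real.cos (Real.pi / ((K:ℝ)+1))) * ∑ j ∈ range K, (Y (j+1))^2 := by
  set θ : ℝ := Real.pi / ((K:ℝ)+1) with hθ
  have hK1pos : (0:ℝ) < (K:ℝ)+1 := by positivity
  have hθpos : 0 < θ := div_pos Real.pi_pos hK1pos
  set w : ℕ → ℝ := fun j => Real.sin (j * θ) with hw
  have hw0 : w 0 = 0 := by simp [hw]
  have hwK1 : w (K+1) = 0 := by
    have : ((K+1 : ℕ) : ℝ) * θ = Real.pi := by
      rw [hθ]; push_cast; field_simp
    push_cast at this
    simp [hw, this, Real.sin_pi]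
  have hwpos : ∀ j, 1 ≤ j → j ≤ K → 0 < w j := by
    intro j h1 h2
    apply Real.sin_pos_of_pos_of_lt_pi
    · have : (1:ℝ) ≤ (j:ℝ) := by exact_mod_cast h1
      nlinarith
    · have hj : (j:ℝ) < (K:ℝ)+1 := by exact_mod_cast Nat.lt_succ_of_le h2
      have : (j:ℝ) * θ < ((K:ℝ)+1) * θ := by nlinarith
      calc (j:ℝ)*θ < ((K:ℝ)+1)*θ := this
        _ = Real.pi := by rw [hθ]; field_simp
  have hrec : ∀ j, w j + w (j+2) = 2 * Real.cos θ * w (j+1) := by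
    intro j
    have e1 : ((j:ℝ)) * θ = ((j:ℝ)+1)*θ - θ := by ring
    have e2 : (((j+2):ℕ):ℝ) * θ = ((j:ℝ)+1)*θ + θ := by push_cast; ring
    have e3 : (((j+1):ℕ):ℝ) * θ = ((j:ℝ)+1)*θ := by push_cast; ring
    simp only [hw, e1, e2, e3, Real.sin_add, Real.sin_sub]
    ring
  have edge : ∀ j ∈ range (K+1),
      (Y (j+1) - Y j)^2 ≤ (1 + w j / w (j+1)) * Y (j+1)^2 + (1 + w (j+1) / w j) * Y j^2 := by
    intro j hj
    rw [mem_range] at hj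
    rcases Nat.eq_zero_or_pos j with rfl | hj1
    · simp [h0, hw0]
    · rcases eq_or_lt_of_le (Nat.succ_le_of_lt hj) with hjK | hjK
      · -- j + 1 = K + 1, i.e. j = K
        have hjK' : j = K := by omega
        subst hjK'
        simp [hK1, hwK1, le_refl]
      · exact amgm (w (j+1)) (w j) (Y (j+1)) (Y j)
          (hwpos (j+1) (by omega) (by omega)) (hwpos j hj1 (by omega))
  calc ∑ j ∈ range (K+1), (Y (j+1) - Y j)^2
      ≤ ∑ j ∈ range (K+1), ((1 + w j / w (j+1)) * Y (j+1)^2 + (1 + w (j+1) / w j) * Y j^2) :=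
        sum_le_sum edge
    _ = ∑ j ∈ range (K+1), (1 + w j / w (j+1)) * Y (j+1)^2
        + ∑ j ∈ range (K+1), (1 + w (j+1) / w j) * Y j^2 := sum_add_distrib
    _ = ∑ j ∈ range K, (1 + w j / w (j+1)) * Y (j+1)^2
        + ∑ j ∈ range K, (1 + w (j+2) / w (j+1)) * Y (j+1)^2 := by
        rw [sum_range_succ, sum_range_succ']
        simp [h0, hK1]
    _ = ∑ j ∈ range K, (2 + (w j + w (j+2)) / w (j+1)) * Y (j+1)^2 := by
        rw [← sum_add_distrib]
        apply sum_congr rfl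
        intro j hj
        rw [add_div]
        ring
    _ = ∑ j ∈ range K, (2*(1 + Real.cos θ)) * Y (j+1)^2 := by
        apply sum_congr rfl
        intro j hj
        rw [mem_range] at hj
        have hp : 0 < w (j+1) := hwpos (j+1) (by omega) (by omega)
        rw [hrec j, mul_div_assoc, div_self hp.ne']
        ring
    _ = 2*(1 + Real.cos θ) * ∑ j ∈ range K, (Y (j+1))^2 := by rw [mul_sum]

noncomputable def CN (A : ℕ → ℝ) (j i : ℕ) : ℝ :=
  if j = i then A j + A (j+1) else if i = j+1 then -(A (j+1)) else if j = i+1 then -(A j) else 0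

noncomputable def Yof (X : ℕ → ℝ) : ℕ → ℝ := fun n => match n with
  | 0 => 0
  | n+1 => X n


lemma quadform (K : ℕ) (A X : ℕ → ℝ) (hX : ∀ n, K ≤ n → X n = 0) :
    ∑ j ∈ range K, ∑ i ∈ range K, X j * (CN A j i * X i)
      = ∑ j ∈ range (K+1), A j * (Yof X (j+1) - Yof X j)^2 := by
  have hY1 : ∀ j, Yof X (j+1) = X j := fun j => rfl
  have hY0 : Yof X 0 = 0 := rfl
  -- inner sum collapse
  have inner : ∀ j ∈ range K,
      ∑ i ∈ range K, CN A j i * X i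
        = (A j + A (j+1)) * X j - A (j+1) * X (j+1) - A j * Yof X j := by
    intro j hj
    rw [mem_range] at hj
    have split : ∀ i, CN A j i * X i =
        (if j = i then (A j + A (j+1)) * X i else 0)
        + (if i = j+1 then -(A (j+1)) * X i else 0)
        + (if j = i+1 then -(A j) * X i else 0) := by
      intro i
      unfold CN
      by_cases h1 : j = i
      · rw [if_pos h1, if_pos h1, if_neg (by omega), if_neg (by omega)]; ring
      · rw [if_neg h1, if_neg h1]
        by_cases h2 : i = j+1
        · rw [if_pos h2, if_pos h2, if_neg (by omega)]; ring
        · rw [if_neg h2, if_neg h2]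
          by_cases h3 : j = i+1
          · rw [if_pos h3, if_pos h3]; ring
          · rw [if_neg h3, if_neg h3]; ring
    calc ∑ i ∈ range K, CN A j i * X i
        = ∑ i ∈ range K, ((if j = i then (A j + A (j+1)) * X i else 0)
          + (if i = j+1 then -(A (j+1)) * X i else 0)
          + (if j = i+1 then -(A j) * X i else 0)) := sum_congr rfl (fun i _ => split i)
      _ = (A j + A (j+1)) * X j - A (j+1) * X (j+1) - A j * Yof X j := by
          rw [sum_add_distrib, sum_add_distrib, sum_ite_eq, sum_ite_eq']
          have h3 : ∑ i ∈ range K, (if j = i+1 then -(A j) * X i else 0)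
              = -(A j) * Yof X j := by
            rcases j with _ | j'
            · simp [hY0]
            · have hsp : ∀ i ∈ range K, (if j'+1 = i+1 then -(A (j'+1)) * X i else 0)
                  = if i = j' then -(A (j'+1)) * X i else 0 := by
                intro i _
                by_cases h : i = j'
                · rw [if_pos (by omega), if_pos h]
                · rw [if_neg (by omega), if_neg h]
              rw [sum_congr rfl hsp, sum_ite_eq', if_pos (mem_range.mpr (by omega))]
              rw [hY1]
          rw [h3, if_pos (mem_range.mpr hj)]
          by_cases hK2 : j+1 < K
          · rw [if_pos (mem_range.mpr hK2)]; ring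
          · rw [if_neg (by simp [mem_range]; omega), hX (j+1) (by omega)]; ring
  have lhs_eq : ∑ j ∈ range K, ∑ i ∈ range K, X j * (CN A j i * X i)
      = ∑ j ∈ range K, X j * ((A j + A (j+1)) * X j - A (j+1) * X (j+1) - A j * Yof X j) := by
    apply sum_congr rfl
    intro j hj
    rw [← mul_sum, inner j hj]
  rw [lhs_eq]
  set P : ℝ := ∑ j ∈ range K, A (j+1) * (X j * X (j+1)) with hP
  have hT2 : ∑ j ∈ range (K+1), A j * (X j * Yof X j) = P := by
    rw [sum_range_succ']
    simp only [hY1, hY0, mul_zero, add_zero, hP]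
    exact sum_congr rfl (fun j _ => by ring)
  have hR : ∑ j ∈ range K, A j * (X j * Yof X j) = P := by
    have h := hT2
    rw [sum_range_succ, hX K le_rfl] at h
    simpa using h
  have e1 : ∑ j ∈ range (K+1), A j * (Yof X (j+1) - Yof X j)^2
      = ∑ j ∈ range K, A j * X j^2 + ∑ j ∈ range K, A (j+1) * X j^2 - 2 * P := by
    have expand : ∀ j ∈ range (K+1), A j * (Yof X (j+1) - Yof X j)^2
        = (A j * X j^2 + A j * (Yof X j)^2) - 2 * (A j * (X j * Yof X j)) := by
      intro j _; rw [hY1]; ring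
    rw [sum_congr rfl expand, sum_sub_distrib, sum_add_distrib, ← mul_sum, hT2]
    congr 1
    congr 1
    · rw [sum_range_succ, hX K le_rfl]; simp
    · rw [sum_range_succ']
      simp only [hY1, hY0]
      simp
  rw [e1]
  have expand2 : ∀ j ∈ range K, X j * ((A j + A (j+1)) * X j - A (j+1) * X (j+1) - A j * Yof X j)
      = (A j * X j^2 + A (j+1) * X j^2) - (A (j+1) * (X j * X (j+1)) + A j * (X j * Yof X j)) := by
    intro j _; ring
  rw [sum_congr rfl expand2, sum_sub_distrib, sum_add_distrib, sum_add_distrib, ← hP, hR]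
  ring

theorem stmt1 (m K : ℕ) (hm : 1 ≤ m) (hK : 1 ≤ K)
    (a : Fin (K + 1) → ℝ)
    (H : Matrix (Fin K × Fin m) (Fin K × Fin m) ℝ)
    (hH : ∀ (j i : Fin K) (r s : Fin m),
      H (j, r) (i, s) =
        if j = i ∧ r = s then a j.castSucc + a j.succ
        else if (i : ℕ) = (j : ℕ) + 1 ∧ r = s then -(a i.castSucc)
        else if (j : ℕ) = (i : ℕ) + 1 ∧ r = s then -(a j.castSucc)
        else 0)
    (μ : ℝ) (hμ : Module.End.HasEigenvalue (Matrix.toLin' H) μ) :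
    2 * (1 + Real.cos (Real.pi / (K + 1))) * min 0 (⨅ j, a j) ≤ μ := by
  obtain ⟨v, hv⟩ := hμ.exists_hasEigenvector
  set c : ℝ := min 0 (⨅ j, a j) with hc
  set B : ℝ := 2 * (1 + Real.cos (Real.pi / ((K:ℝ) + 1))) with hB
  have hc0 : c ≤ 0 := min_le_left _ _
  have hca : ∀ j : Fin (K+1), c ≤ a j := fun j =>
    (min_le_right _ _).trans (ciInf_le (Finite.bddBelow_range a) j)
  set A : ℕ → ℝ := fun n => if h : n < K + 1 then a ⟨n, h⟩ else 0 with hA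
  set X : Fin m → ℕ → ℝ := fun r n => if h : n < K then v (⟨n, h⟩, r) else 0 with hXdef
  have hXz : ∀ r n, K ≤ n → X r n = 0 := by
    intro r n hn; simp only [hXdef]; rw [dif_neg (by omega)]
  have hXv : ∀ (r : Fin m) (j : Fin K), X r ↑j = v (j, r) := by
    intro r j; simp only [hXdef]; rw [dif_pos j.isLt]
  have hAcast : ∀ j : Fin K, a j.castSucc = A ↑j := by
    intro j
    simp only [hA]
    rw [dif_pos (Nat.lt_succ_of_lt j.isLt)]
    exact congrArg a (Fin.ext rfl)
  have hAsucc : ∀ j : Fin K, a j.succ = A (↑j + 1) := by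
    intro j
    simp only [hA]
    rw [dif_pos (Nat.succ_lt_succ j.isLt)]
    exact congrArg a (Fin.ext rfl)
  have hH' : ∀ (j i : Fin K) (r s : Fin m),
      H (j, r) (i, s) = if r = s then CN A ↑j ↑i else 0 := by
    intro j i r s
    rw [hH]
    by_cases hrs : r = s
    · rw [if_pos hrs]
      unfold CN
      by_cases h1 : j = i
      · subst h1
        rw [if_pos ⟨rfl, hrs⟩, if_pos rfl, hAcast, hAsucc]
      · rw [if_neg (by tauto), if_neg (fun h => h1 (Fin.ext h))]
        by_cases h2 : (i : ℕ) = (j : ℕ) + 1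
        · rw [if_pos ⟨h2, hrs⟩, if_pos h2, hAcast, h2]
        · rw [if_neg (by tauto), if_neg h2]
          by_cases h3 : (j : ℕ) = (i : ℕ) + 1
          · rw [if_pos ⟨h3, hrs⟩, if_pos h3, hAcast]
          · rw [if_neg (by tauto), if_neg h3]
    · rw [if_neg hrs, if_neg (by tauto), if_neg (by tauto), if_neg (by tauto)]
  -- mulVec computation
  have step1 : ∀ (r : Fin m) (j : Fin K),
      H.mulVec v (j, r) = ∑ i : Fin K, CN A ↑j ↑i * X r ↑i := by
    intro r j
    simp only [Matrix.mulVec, dotProduct]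
    rw [Fintype.sum_prod_type]
    apply sum_congr rfl
    intro i _
    calc ∑ s : Fin m, H (j, r) (i, s) * v (i, s)
        = ∑ s : Fin m, (if r = s then CN A ↑j ↑i * v (i, s) else 0) := by
          apply sum_congr rfl; intro s _
          rw [hH', ite_mul, zero_mul]
      _ = CN A ↑j ↑i * v (i, r) := by rw [Finset.sum_ite_eq]; simp
      _ = CN A ↑j ↑i * X r ↑i := by rw [hXv]
  -- eigen equation
  set N : ℝ := ∑ p : Fin K × Fin m, v p ^ 2 with hN
  have hQeig : ∑ p : Fin K × Fin m, v p * H.mulVec v p = μ * N := by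
    have hmv : H.mulVec v = μ • v := by
      have h := hv.apply_eq_smul
      rwa [Matrix.toLin'_apply] at h
    rw [hmv, hN, mul_sum]
    apply sum_congr rfl
    intro p _
    simp only [Pi.smul_apply, smul_eq_mul]
    ring
  -- quadratic form identity
  have hQform : ∑ p : Fin K × Fin m, v p * H.mulVec v p
      = ∑ r : Fin m, ∑ j ∈ range (K+1), A j * (Yof (X r) (j+1) - Yof (X r) j)^2 := by
    rw [Fintype.sum_prod_type, Finset.sum_comm]
    apply sum_congr rfl
    intro r _
    rw [← quadform K A (X r) (hXz r)]
    rw [← Fin.sum_univ_eq_sum_range (fun n => ∑ i ∈ range K, X r n * (CN A n i * X r i)) K]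
    apply sum_congr rfl
    intro j _
    rw [step1 r j, ← Fin.sum_univ_eq_sum_range (fun i => X r ↑j * (CN A ↑j i * X r i)) K,
      mul_sum]
    apply sum_congr rfl
    intro i _
    rw [hXv r j]
  -- per-coordinate lower bound
  have per_r : ∀ r : Fin m,
      B * c * (∑ j ∈ range K, (X r j)^2)
        ≤ ∑ j ∈ range (K+1), A j * (Yof (X r) (j+1) - Yof (X r) j)^2 := by
    intro r
    have hY0 : Yof (X r) 0 = 0 := rfl
    have hYK1 : Yof (X r) (K+1) = 0 := hXz r K le_rfl
    have h2 := keybound K (Yof (X r)) hY0 hYK1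
    have h1 : c * ∑ j ∈ range (K+1), (Yof (X r) (j+1) - Yof (X r) j)^2
        ≤ ∑ j ∈ range (K+1), A j * (Yof (X r) (j+1) - Yof (X r) j)^2 := by
      rw [mul_sum]
      apply sum_le_sum
      intro j hj
      rw [mem_range] at hj
      have : c ≤ A j := by
        simp only [hA]; rw [dif_pos hj]; exact hca _
      exact mul_le_mul_of_nonneg_right this (sq_nonneg _)
    have h3 : c * (B * ∑ j ∈ range K, (Yof (X r) (j+1))^2)
        ≤ c * ∑ j ∈ range (K+1), (Yof (X r) (j+1) - Yof (X r) j)^2 :=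
      mul_le_mul_of_nonpos_left h2 hc0
    have h4 : ∑ j ∈ range K, (Yof (X r) (j+1))^2 = ∑ j ∈ range K, (X r j)^2 := rfl
    rw [h4] at h3
    calc B * c * (∑ j ∈ range K, (X r j)^2)
        = c * (B * ∑ j ∈ range K, (X r j)^2) := by ring
      _ ≤ c * ∑ j ∈ range (K+1), (Yof (X r) (j+1) - Yof (X r) j)^2 := h3
      _ ≤ _ := h1
  -- sum over r
  have hNsplit : ∑ r : Fin m, ∑ j ∈ range K, (X r j)^2 = N := by
    have h1 : ∀ r : Fin m, ∑ j ∈ range K, (X r j)^2 = ∑ j : Fin K, v (j, r)^2 := by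
      intro r
      rw [← Fin.sum_univ_eq_sum_range (fun n => (X r n)^2) K]
      exact sum_congr rfl (fun j _ => by rw [hXv])
    rw [sum_congr rfl (fun r _ => h1 r), hN, Fintype.sum_prod_type]
    exact Finset.sum_comm
  have hmain : B * c * N ≤ μ * N := by
    rw [← hQeig, hQform, ← hNsplit, mul_sum]
    exact sum_le_sum (fun r _ => per_r r)
  have hNpos : 0 < N := by
    obtain ⟨p, hp⟩ := Function.ne_iff.mp hv.2
    have hp' : v p ≠ 0 := by simpa using hp
    have h1 : 0 < v p ^ 2 := by positivity
    have h2 : v p ^ 2 ≤ N := Finset.single_le_sum (f := fun p => v p ^ 2)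
      (fun i _ => sq_nonneg _) (mem_univ p)
    linarith
  exact le_of_mul_le_mul_right hmain hNpos
end
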